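/- arXiv:1505.00610 — 2 statements merged into one kernel-verified Lean document; each statement's English description precedes it below -/
import Mathlib

section
/- Then for all 0 ≤ j, k ≤ n−1 the integral ∫₀^∞ P_j(x) Q_k(x) dx converges absolutely and equals δ_{j,k} (1 if j = k and 0 otherwise). -/
/-!
Writing `Q_k` as the multiplicative convolution of `q_k` with the Gamma weight `t^ν e^{-t}`,
Fubini and the substitution `x = t u` give, for every moment,
`∫ x^m Q_k(x) dx = (∫ t^(m+ν) e^{-t} dt) (∫ u^m q_k(u) du) = (m+ν)! ∫ u^m q_k(u) du`.
The factor `(m+ν)!` cancels the denominator of the coefficient of `x^m` in `P_j`, so by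
linearity `∫ P_j Q_k = ∫ p_j q_k = δ_{jk}`.
-/

open MeasureTheory Set

open scoped Nat

lemma integrableOn_pow_mul_exp_neg_Ioi (k : ℕ) :
    IntegrableOn (fun t : ℝ => t ^ k * Real.exp (-t)) (Ioi 0) := by
  refine (Real.GammaIntegral_convergent (s := k + 1) (by positivity)).congr_fun (fun t _ => ?_)
    measurableSet_Ioi
  dsimp only
  rw [add_sub_cancel_right, Real.rpow_natCast, mul_comm]

lemma integral_pow_mul_exp_neg_Ioi (k : ℕ) :
    ∫ t in Ioi (0 : ℝ), t ^ k * Real.exp (-t) = k ! := by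
  rw [← Real.Gamma_nat_eq_factorial, Real.Gamma_eq_integral (by positivity)]
  refine setIntegral_congr_fun measurableSet_Ioi fun t _ => ?_
  rw [add_sub_cancel_right, Real.rpow_natCast, mul_comm]

section CompDiv

variable {E : Type*} [NormedAddCommGroup E] {t : ℝ}

lemma MeasureTheory.IntegrableOn.comp_div_Ioi_zero {h : ℝ → E} (hh : IntegrableOn h (Ioi 0))
    (ht : 0 < t) :
    IntegrableOn (fun x => h (x / t)) (Ioi 0) := by
  have := (integrableOn_Ioi_comp_mul_left_iff h 0 (inv_pos.2 ht)).2 (by rwa [mul_zero])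
  simpa only [div_eq_inv_mul] using this

lemma integral_comp_div_Ioi_zero [NormedSpace ℝ E] (h : ℝ → E) (ht : 0 < t) :
    ∫ x in Ioi 0, h (x / t) = t • ∫ x in Ioi 0, h x := by
  simp only [div_eq_inv_mul, integral_comp_mul_left_Ioi h 0 (inv_pos.2 ht), mul_zero, inv_inv]

end CompDiv

noncomputable def mellinConv (w f : ℝ → ℝ) (x : ℝ) : ℝ :=
  ∫ t in Ioi 0, w t * f (x / t) / t

section MellinConv

variable {w f : ℝ → ℝ}

lemma integrable_mellinConv_kernel (hw : Measurable w) (hf : Measurable f)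
    (hwi : IntegrableOn w (Ioi 0)) (hfi : IntegrableOn f (Ioi 0)) :
    Integrable (fun p : ℝ × ℝ => w p.1 * f (p.2 / p.1) / p.1)
      ((volume.restrict (Ioi 0)).prod (volume.restrict (Ioi 0))) := by
  have hmeas : Measurable fun p : ℝ × ℝ => w p.1 * f (p.2 / p.1) / p.1 := by fun_prop
  refine (integrable_prod_iff hmeas.aestronglyMeasurable).2 ⟨?_, ?_⟩
  · filter_upwards [ae_restrict_mem measurableSet_Ioi] with t (ht : 0 < t)
    simpa only [mul_div_right_comm] using (hfi.comp_div_Ioi_zero ht).const_mul (w t / t)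
  · refine (hwi.norm.mul_const (∫ x in Ioi 0, ‖f x‖)).congr ?_
    filter_upwards [ae_restrict_mem measurableSet_Ioi] with t (ht : 0 < t)
    have : ∀ x, ‖w t * f (x / t) / t‖ = ‖w t‖ / t * ‖f (x / t)‖ := fun x => by
      rw [norm_div, norm_mul, Real.norm_of_nonneg ht.le]; ring
    simp only [this, integral_const_mul, integral_comp_div_Ioi_zero (fun x => ‖f x‖) ht,
      smul_eq_mul]
    field_simp

lemma integrableOn_mellinConv (hw : Measurable w) (hf : Measurable f)
    (hwi : IntegrableOn w (Ioi 0)) (hfi : IntegrableOn f (Ioi 0)) :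
    IntegrableOn (mellinConv w f) (Ioi 0) :=
  (integrable_mellinConv_kernel hw hf hwi hfi).swap.integral_prod_left

lemma integral_mellinConv (hw : Measurable w) (hf : Measurable f)
    (hwi : IntegrableOn w (Ioi 0)) (hfi : IntegrableOn f (Ioi 0)) :
    ∫ x in Ioi 0, mellinConv w f x = (∫ t in Ioi 0, w t) * ∫ u in Ioi 0, f u := by
  have inner (t : ℝ) (ht : 0 < t) :
      ∫ x in Ioi 0, w t * f (x / t) / t = w t * ∫ u in Ioi 0, f u := by
    simp only [mul_div_right_comm, integral_const_mul,
      integral_comp_div_Ioi_zero f ht, smul_eq_mul]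
    field_simp
  calc ∫ x in Ioi 0, mellinConv w f x
      = ∫ t in Ioi 0, ∫ x in Ioi 0, w t * f (x / t) / t :=
        (integral_integral_swap (integrable_mellinConv_kernel hw hf hwi hfi)).symm
    _ = (∫ t in Ioi 0, w t) * ∫ u in Ioi 0, f u := by
        rw [setIntegral_congr_fun measurableSet_Ioi inner, integral_mul_const]

lemma pow_mul_mellinConv (m : ℕ) (x : ℝ) :
    x ^ m * mellinConv w f x = mellinConv (fun t => t ^ m * w t) (fun u => u ^ m * f u) x := by
  rw [mellinConv, mellinConv, ← integral_const_mul]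
  refine setIntegral_congr_fun measurableSet_Ioi fun t (ht : 0 < t) => ?_
  have hx : t ^ m * (x / t) ^ m = x ^ m := by rw [← mul_pow, mul_div_cancel₀ _ ht.ne']
  simp only [← hx]
  ring

end MellinConv

lemma integrableOn_pow_mul_mellinConv_gamma {f : ℝ → ℝ} (ν m : ℕ) (hf : Measurable f)
    (hfi : IntegrableOn (fun u => u ^ m * f u) (Ioi 0)) :
    IntegrableOn (fun x => x ^ m * mellinConv (fun t => t ^ ν * Real.exp (-t)) f x) (Ioi 0) := by
  simp_rw [pow_mul_mellinConv]
  refine integrableOn_mellinConv (by fun_prop) (by fun_prop) ?_ hfi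
  simpa only [← mul_assoc, ← pow_add] using integrableOn_pow_mul_exp_neg_Ioi (m + ν)

lemma integral_pow_mul_mellinConv_gamma {f : ℝ → ℝ} (ν m : ℕ) (hf : Measurable f)
    (hfi : IntegrableOn (fun u => u ^ m * f u) (Ioi 0)) :
    ∫ x in Ioi 0, x ^ m * mellinConv (fun t => t ^ ν * Real.exp (-t)) f x
      = (m + ν)! * ∫ u in Ioi 0, u ^ m * f u := by
  simp_rw [pow_mul_mellinConv]
  rw [integral_mellinConv (by fun_prop) (by fun_prop) ?_ hfi]
  · simp only [← mul_assoc, ← pow_add, integral_pow_mul_exp_neg_Ioi]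
  · simpa only [← mul_assoc, ← pow_add] using integrableOn_pow_mul_exp_neg_Ioi (m + ν)

section PolynomialMoments

variable {s : Set ℝ} {g : ℝ → ℝ} {S : Finset ℕ} (c : ℕ → ℝ)

lemma sum_mul_pow_mul (x : ℝ) :
    (∑ i ∈ S, c i * x ^ i) * g x = ∑ i ∈ S, c i * (x ^ i * g x) := by
  rw [Finset.sum_mul]
  exact Finset.sum_congr rfl fun i _ => mul_assoc _ _ _

lemma integrableOn_sum_mul_pow_mul (hg : ∀ i ∈ S, IntegrableOn (fun x => x ^ i * g x) s) :
    IntegrableOn (fun x => (∑ i ∈ S, c i * x ^ i) * g x) s := by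
  simp_rw [sum_mul_pow_mul]
  exact integrable_finsetSum _ fun i hi => (hg i hi).const_mul (c i)

lemma integral_sum_mul_pow_mul (hg : ∀ i ∈ S, IntegrableOn (fun x => x ^ i * g x) s) :
    ∫ x in s, (∑ i ∈ S, c i * x ^ i) * g x = ∑ i ∈ S, c i * ∫ x in s, x ^ i * g x := by
  simp_rw [sum_mul_pow_mul]
  rw [integral_finsetSum _ fun i hi => (hg i hi).const_mul (c i)]
  simp only [integral_const_mul]

end PolynomialMoments

theorem stmt7_general
    (n : ℕ) (ν : ℕ)
    (a : ℕ → ℕ → ℝ)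
    (p : ℕ → ℝ → ℝ)
    (hp : ∀ k < n, ∀ x : ℝ, p k x = ∑ j ∈ Finset.range (k + 1), a j k * x ^ j)
    (q : ℕ → ℝ → ℝ) (hqmeas : ∀ k < n, Measurable (q k))
    (hqint : ∀ k < n, ∀ j < n, IntegrableOn (fun x => x ^ j * |q k x|) (Ioi 0))
    (hbiorth : ∀ j < n, ∀ k < n,
      ∫ x in Ioi (0:ℝ), p j x * q k x = if j = k then 1 else 0)
    (P : ℕ → ℝ → ℝ)
    (hP : ∀ k < n, ∀ x : ℝ, P k x =
      ∑ j ∈ Finset.range (k + 1), a j k / (Nat.factorial (j + ν) : ℝ) * x ^ j)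
    (Q : ℕ → ℝ → ℝ)
    (hQ : ∀ k < n, ∀ y ∈ Ioi (0:ℝ),
      Q k y = ∫ t in Ioi (0:ℝ), t ^ ν * Real.exp (-t) * q k (y / t) / t) :
    ∀ j < n, ∀ k < n,
      IntegrableOn (fun x => P j x * Q k x) (Ioi 0) ∧
      ∫ x in Ioi (0:ℝ), P j x * Q k x = if j = k then 1 else 0 := by
  intro j hj k hk
  have hqk := hqmeas k hk
  have hq_moment (i : ℕ) (hi : i ∈ Finset.range (j + 1)) :
      IntegrableOn (fun x => x ^ i * q k x) (Ioi 0) := by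
    refine (integrable_norm_iff (by fun_prop)).1 ((hqint k hk i (by grind)).congr_fun ?_
      measurableSet_Ioi)
    intro x (hx : 0 < x)
    dsimp only
    rw [norm_mul, norm_pow, Real.norm_of_nonneg hx.le, Real.norm_eq_abs]
  have hQ_moment (i : ℕ) (hi : i ∈ Finset.range (j + 1)) :=
    integrableOn_pow_mul_mellinConv_gamma ν i hqk (hq_moment i hi)
  have hPQ : EqOn (fun x => P j x * Q k x) (fun x => (∑ i ∈ Finset.range (j + 1),
      a i j / (i + ν)! * x ^ i) * mellinConv (fun t => t ^ ν * Real.exp (-t)) (q k) x) (Ioi 0) :=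
    fun x hx => by dsimp only; rw [hP j hj x, hQ k hk x hx, mellinConv]
  have hpq : (fun x => p j x * q k x) =
      fun x => (∑ i ∈ Finset.range (j + 1), a i j * x ^ i) * q k x :=
    funext fun x => by rw [hp j hj x]
  refine ⟨(integrableOn_congr_fun hPQ measurableSet_Ioi).2
    (integrableOn_sum_mul_pow_mul _ hQ_moment), ?_⟩
  rw [setIntegral_congr_fun measurableSet_Ioi hPQ, integral_sum_mul_pow_mul _ hQ_moment,
    ← hbiorth j hj k hk, hpq, integral_sum_mul_pow_mul _ hq_moment]
  refine Finset.sum_congr rfl fun i hi => ?_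
  rw [integral_pow_mul_mellinConv_gamma ν i hqk (hq_moment i hi)]
  field_simp

/-- Biorthogonality of the transformed system `(P_k, Q_k)` arising from
multiplication by a complex Ginibre matrix with parameter `ν`:
`P_k(x) = Σ_j a_{j,k}/(j+ν)! x^j` and `Q_k` is the Mellin convolution of `q_k`
with the Gamma density `t^ν e^{-t}`. -/
theorem stmt7
    (n : ℕ) (hn : 1 ≤ n) (ν : ℕ)
    (a : ℕ → ℕ → ℝ) (ha : ∀ k < n, a k k ≠ 0)
    (p : ℕ → ℝ → ℝ)
    (hp : ∀ k < n, ∀ x : ℝ, p k x = ∑ j ∈ Finset.range (k + 1), a j k * x ^ j)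
    (q : ℕ → ℝ → ℝ) (hqmeas : ∀ k < n, Measurable (q k))
    (hqint : ∀ k < n, ∀ j < n, IntegrableOn (fun x => x ^ j * |q k x|) (Ioi 0))
    (hbiorth : ∀ j < n, ∀ k < n,
      ∫ x in Ioi (0:ℝ), p j x * q k x = if j = k then 1 else 0)
    (P : ℕ → ℝ → ℝ)
    (hP : ∀ k < n, ∀ x : ℝ, P k x =
      ∑ j ∈ Finset.range (k + 1), a j k / (Nat.factorial (j + ν) : ℝ) * x ^ j)
    (Q : ℕ → ℝ → ℝ)
    (hQ : ∀ k < n, ∀ y ∈ Ioi (0:ℝ),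
      Q k y = ∫ t in Ioi (0:ℝ), t ^ ν * Real.exp (-t) * q k (y / t) / t) :
    ∀ j < n, ∀ k < n,
      IntegrableOn (fun x => P j x * Q k x) (Ioi 0) ∧
      ∫ x in Ioi (0:ℝ), P j x * Q k x = if j = k then 1 else 0 :=
  stmt7_general n ν a p hp q hqmeas hqint hbiorth P hP Q hQ
end

section
/- Then the polynomial P_n(x) = Σ_{j=0}^{n} ( (n+ν)! (j+ν+μ)! / ((n+ν+μ)! (j+ν)!) ) a_j x^j is a monic polynomial of degree n, and ∫₀^∞ P_n(x) Q_k(x) dx = 0 for every k = 0,…,n−1. -/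
/-!
Writing `Q = ∫₀¹ w(t) q(·/t) dt/t` with `w(t) = t^ν (1-t)^(μ-1)`, Fubini and the dilation
`x = t y` give `∫₀^∞ x^j Q(x) dx = B(j+ν+1, μ) ∫₀^∞ y^j q(y) dy`: the moments of `Q` are those of
`q`, each multiplied by a Beta value. The coefficients of `P_n` are those of `p_n` divided by
exactly these Beta values (up to a common constant), so `∫ P_n Q = const · ∫ p_n q = 0`.
-/

open MeasureTheory Set
open scoped Nat

section Dilation

variable {q : ℝ → ℝ} {t : ℝ} {j : ℕ}

lemma integral_Ioi_pow_mul_comp_div (q : ℝ → ℝ) (j : ℕ) (ht : 0 < t) :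
    ∫ x in Ioi 0, x ^ j * q (x / t) = t ^ (j + 1) * ∫ y in Ioi 0, y ^ j * q y := by
  have h := integral_comp_mul_left_Ioi (fun y => (t * y) ^ j * q y) 0 (inv_pos.2 ht)
  simp only [mul_zero, smul_eq_mul, inv_inv, ← mul_assoc, mul_inv_cancel₀ ht.ne', one_mul] at h
  simp only [div_eq_inv_mul, h, mul_pow, mul_assoc, integral_const_mul, pow_succ']

lemma integrableOn_Ioi_pow_mul_comp_div (hq : IntegrableOn (fun y => y ^ j * q y) (Ioi 0))
    (ht : 0 < t) : IntegrableOn (fun x => x ^ j * q (x / t)) (Ioi 0) := by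
  have h : IntegrableOn (fun y => (t * y) ^ j * q y) (Ioi (t⁻¹ * 0)) := by
    simp only [mul_zero, mul_pow, mul_assoc]
    exact hq.const_mul (t ^ j)
  refine ((integrableOn_Ioi_comp_mul_left_iff _ 0 (inv_pos.2 ht)).2 h).congr_fun
    (fun x _ => ?_) measurableSet_Ioi
  simp only [div_eq_inv_mul, ← mul_assoc, mul_inv_cancel₀ ht.ne', one_mul]

lemma integral_Ioi_pow_mul_kernel (q : ℝ → ℝ) (j : ℕ) (c : ℝ) (ht : 0 < t) :
    ∫ x in Ioi 0, x ^ j * (c * q (x / t) / t) = t ^ j * c * ∫ y in Ioi 0, y ^ j * q y := by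
  have hsplit : ∀ x, x ^ j * (c * q (x / t) / t) = c / t * (x ^ j * q (x / t)) :=
    fun _ => by ring
  simp only [hsplit, integral_const_mul, integral_Ioi_pow_mul_comp_div q j ht]
  field_simp
  ring

lemma integrableOn_Ioi_pow_mul_kernel (c : ℝ) (hq : IntegrableOn (fun y => y ^ j * q y) (Ioi 0))
    (ht : 0 < t) : IntegrableOn (fun x => x ^ j * (c * q (x / t) / t)) (Ioi 0) := by
  refine IntegrableOn.congr_fun ((integrableOn_Ioi_pow_mul_comp_div hq ht).const_mul (c / t))
    (fun x _ => ?_) measurableSet_Ioi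
  ring

end Dilation

section MultiplicativeConvolution

variable {s : Set ℝ} {w q Q : ℝ → ℝ} {j : ℕ}

lemma integrable_prod_pow_mul_kernel (hs : MeasurableSet s) (hs0 : s ⊆ Ioi 0)
    (hw : Measurable w) (hq : Measurable q) (hwj : IntegrableOn (fun t => t ^ j * w t) s)
    (hqj : IntegrableOn (fun y => y ^ j * q y) (Ioi 0)) :
    Integrable (fun p : ℝ × ℝ => p.2 ^ j * (w p.1 * q (p.2 / p.1) / p.1))
      ((volume.restrict s).prod (volume.restrict (Ioi 0))) := by
  have hnorm : ∀ t ∈ s, ∀ x ∈ Ioi (0 : ℝ), ‖x ^ j * (w t * q (x / t) / t)‖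
      = x ^ j * (|w t| * |q (x / t)| / t) := fun t ht x hx => by
    rw [norm_mul, norm_div, norm_mul, Real.norm_eq_abs, Real.norm_eq_abs, Real.norm_eq_abs,
      Real.norm_eq_abs, abs_of_pos (a := t) (hs0 ht), abs_of_pos (a := x ^ j) (pow_pos hx j)]
  rw [integrable_prod_iff (by fun_prop)]
  refine ⟨(ae_restrict_iff' hs).2 (.of_forall fun t ht =>
    integrableOn_Ioi_pow_mul_kernel (w t) hqj (hs0 ht)), ?_⟩
  refine IntegrableOn.congr_fun (hwj.norm.mul_const (∫ y in Ioi 0, y ^ j * |q y|))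
    (fun t ht => ?_) hs
  rw [setIntegral_congr_fun measurableSet_Ioi (hnorm t ht),
    integral_Ioi_pow_mul_kernel (fun y => |q y|) j _ (hs0 ht), norm_mul, Real.norm_eq_abs,
    Real.norm_eq_abs, abs_of_pos (pow_pos (hs0 ht) j)]

variable (hs : MeasurableSet s) (hs0 : s ⊆ Ioi 0) (hw : Measurable w) (hq : Measurable q)
  (hwj : IntegrableOn (fun t => t ^ j * w t) s) (hqj : IntegrableOn (fun y => y ^ j * q y) (Ioi 0))
  (hQ : ∀ y ∈ Ioi 0, Q y = ∫ t in s, w t * q (y / t) / t)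
include hs hs0 hw hq hwj hqj hQ

lemma integrableOn_pow_mul_of_eq_integral_kernel :
    IntegrableOn (fun x => x ^ j * Q x) (Ioi 0) := by
  have h := (integrable_prod_pow_mul_kernel hs hs0 hw hq hwj hqj).integral_prod_right
  simp only [integral_const_mul] at h
  exact IntegrableOn.congr_fun h (fun x hx => by rw [hQ x hx]) measurableSet_Ioi

lemma integral_pow_mul_of_eq_integral_kernel :
    ∫ x in Ioi 0, x ^ j * Q x = (∫ t in s, t ^ j * w t) * ∫ y in Ioi 0, y ^ j * q y := by
  have hinner : EqOn (fun t => ∫ x in Ioi 0, x ^ j * (w t * q (x / t) / t))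
      (fun t => t ^ j * w t * ∫ y in Ioi 0, y ^ j * q y) s :=
    fun t ht => integral_Ioi_pow_mul_kernel q j (w t) (hs0 ht)
  rw [setIntegral_congr_fun measurableSet_Ioi fun x hx => by rw [hQ x hx, ← integral_const_mul],
    ← integral_integral_swap (integrable_prod_pow_mul_kernel hs hs0 hw hq hwj hqj),
    setIntegral_congr_fun hs hinner, integral_mul_const]

end MultiplicativeConvolution

lemma integral_Ioo_pow_mul_one_sub_pow (m k : ℕ) :
    ∫ t in Ioo (0:ℝ) 1, t ^ m * (1 - t) ^ k = (m ! * k ! : ℝ) / (m + k + 1)! := by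
  have hB : ((∫ t in Ioo (0:ℝ) 1, t ^ m * (1 - t) ^ k : ℝ) : ℂ)
      = Complex.betaIntegral (m + 1) (k + 1) := by
    rw [← integral_Ioc_eq_integral_Ioo, ← intervalIntegral.integral_of_le zero_le_one,
      Complex.betaIntegral, ← intervalIntegral.integral_ofReal]
    refine intervalIntegral.integral_congr fun t _ => ?_
    push_cast
    simp only [add_sub_cancel_right, Complex.cpow_natCast]
  have hΓ := Complex.Gamma_mul_Gamma_eq_betaIntegral (s := m + 1) (t := k + 1)
    (by simp; positivity) (by simp; positivity)
  rw [show (m + 1 + (k + 1) : ℂ) = ((m + k + 1 : ℕ) : ℂ) + 1 by push_cast; ring,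
    Complex.Gamma_nat_eq_factorial, Complex.Gamma_nat_eq_factorial,
    Complex.Gamma_nat_eq_factorial, ← hB] at hΓ
  have hfac : ((m + k + 1)! : ℂ) ≠ 0 := by exact_mod_cast (m + k + 1).factorial_ne_zero
  apply Complex.ofReal_injective
  push_cast
  rw [eq_div_iff hfac, hΓ, mul_comm]

lemma factorial_ratio_mul_beta (n j ν μ : ℕ) (hμ : 1 ≤ μ) :
    ((n + ν)! * (j + ν + μ)! / ((n + ν + μ)! * (j + ν)!) : ℝ)
        * ((j + ν)! * (μ - 1)! / (j + ν + (μ - 1) + 1)!)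
      = (n + ν)! * (μ - 1)! / (n + ν + μ)! := by
  rw [show j + ν + (μ - 1) + 1 = j + ν + μ by omega]
  field_simp

section PolynomialMoments

variable {μ : Measure ℝ} {F : ℝ → ℝ} {n : ℕ}

lemma integrable_sum_pow_mul (b : ℕ → ℝ) (hF : ∀ j ≤ n, Integrable (fun x => x ^ j * F x) μ) :
    Integrable (fun x => (∑ j ∈ Finset.range (n + 1), b j * x ^ j) * F x) μ := by
  simp only [Finset.sum_mul, mul_assoc]
  exact integrable_finsetSum _ fun j hj =>
    (hF j (Nat.lt_succ_iff.1 (Finset.mem_range.1 hj))).const_mul (b j)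

lemma integral_sum_pow_mul (b : ℕ → ℝ) (hF : ∀ j ≤ n, Integrable (fun x => x ^ j * F x) μ) :
    ∫ x, (∑ j ∈ Finset.range (n + 1), b j * x ^ j) * F x ∂μ
      = ∑ j ∈ Finset.range (n + 1), b j * ∫ x, x ^ j * F x ∂μ := by
  simp only [Finset.sum_mul, mul_assoc, ← integral_const_mul]
  exact integral_finsetSum _ fun j hj =>
    (hF j (Nat.lt_succ_iff.1 (Finset.mem_range.1 hj))).const_mul (b j)

end PolynomialMoments

lemma Polynomial.exists_monic_eval_eq_sum {R : Type*} [CommSemiring R] [Nontrivial R]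
    {b : ℕ → R} {n : ℕ} (hb : b n = 1) :
    ∃ P : Polynomial R, P.Monic ∧ P.natDegree = n ∧
      ∀ x, ∑ j ∈ Finset.range (n + 1), b j * x ^ j = P.eval x := by
  set P := ∑ j ∈ Finset.range (n + 1), C (b j) * X ^ j
  have hdeg : P.natDegree ≤ n := natDegree_sum_le_of_forall_le _ _ fun j hj =>
    (natDegree_C_mul_X_pow_le _ _).trans (Nat.lt_succ_iff.1 (Finset.mem_range.1 hj))
  have hcoeff : P.coeff n = 1 := by simp [P, hb]
  refine ⟨P, monic_of_natDegree_le_of_coeff_eq_one n hdeg hcoeff,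
    natDegree_eq_of_le_of_coeff_ne_zero hdeg (by simp [hcoeff]), fun x => ?_⟩
  simp [P, eval_finsetSum]

lemma integrableOn_Ioi_pow_mul_of_abs {q : ℝ → ℝ} {j : ℕ} (hq : Measurable q)
    (h : IntegrableOn (fun x => x ^ j * |q x|) (Ioi 0)) :
    IntegrableOn (fun x => x ^ j * q x) (Ioi 0) := by
  refine h.mono' (by fun_prop) ((ae_restrict_iff' measurableSet_Ioi).2 (.of_forall fun x hx => ?_))
  rw [norm_mul, Real.norm_eq_abs, Real.norm_eq_abs, abs_of_pos (a := x ^ j) (pow_pos hx j)]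

theorem stmt13_general
    (n : ℕ) (ν μ : ℕ) (hμ : 1 ≤ μ)
    (q : ℕ → ℝ → ℝ) (hqmeas : ∀ k < n, Measurable (q k))
    (hqint : ∀ k < n, ∀ j ≤ n, IntegrableOn (fun x => x ^ j * |q k x|) (Ioi 0))
    (Q : ℕ → ℝ → ℝ)
    (hQ : ∀ k < n, ∀ y ∈ Ioi (0:ℝ),
      Q k y = ∫ t in Ioo (0:ℝ) 1, t ^ ν * (1 - t) ^ (μ - 1) * q k (y / t) / t)
    (a : ℕ → ℝ) (hmonic : a n = 1)
    (pn : ℝ → ℝ)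
    (hpn : ∀ x : ℝ, pn x = ∑ j ∈ Finset.range (n + 1), a j * x ^ j)
    (horth : ∀ k < n, ∫ x in Ioi (0:ℝ), pn x * q k x = 0)
    (Pn : ℝ → ℝ)
    (hPn : ∀ x : ℝ, Pn x = ∑ j ∈ Finset.range (n + 1),
      (Nat.factorial (n + ν) : ℝ) * (Nat.factorial (j + ν + μ) : ℝ) /
        ((Nat.factorial (n + ν + μ) : ℝ) * (Nat.factorial (j + ν) : ℝ)) * a j * x ^ j) :
    (∃ P : Polynomial ℝ, P.Monic ∧ P.natDegree = n ∧ ∀ x : ℝ, Pn x = P.eval x) ∧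
    ∀ k < n,
      IntegrableOn (fun x => Pn x * Q k x) (Ioi 0) ∧
      ∫ x in Ioi (0:ℝ), Pn x * Q k x = 0 := by
  obtain rfl : pn = _ := funext hpn
  obtain rfl : Pn = _ := funext hPn
  refine ⟨Polynomial.exists_monic_eval_eq_sum (by simp only [hmonic, mul_one]; field_simp),
    fun k hk => ?_⟩
  have hqk (j : ℕ) (hj : j ≤ n) : IntegrableOn (fun x => x ^ j * q k x) (Ioi 0) :=
    integrableOn_Ioi_pow_mul_of_abs (hqmeas k hk) (hqint k hk j hj)
  have hwj (j : ℕ) : IntegrableOn (fun t : ℝ => t ^ j * (t ^ ν * (1 - t) ^ (μ - 1))) (Ioo 0 1) :=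
    (Continuous.integrableOn_Icc (by fun_prop)).mono_set Ioo_subset_Icc_self
  have hQk (j : ℕ) (hj : j ≤ n) := integrableOn_pow_mul_of_eq_integral_kernel measurableSet_Ioo
    (fun t ht => ht.1) (by fun_prop) (hqmeas k hk) (hwj j) (hqk j hj) (hQ k hk)
  have hmoments := horth k hk
  rw [integral_sum_pow_mul _ hqk] at hmoments
  refine ⟨integrable_sum_pow_mul _ hQk, ?_⟩
  calc _ = ∑ j ∈ Finset.range (n + 1),
        (n + ν)! * (μ - 1)! / (n + ν + μ)! * (a j * ∫ y in Ioi 0, y ^ j * q k y) := by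
        rw [integral_sum_pow_mul _ hQk]
        refine Finset.sum_congr rfl fun j hj => ?_
        rw [integral_pow_mul_of_eq_integral_kernel measurableSet_Ioo (fun t ht => ht.1)
          (by fun_prop) (hqmeas k hk) (hwj j) (hqk j (Finset.mem_range_succ_iff.1 hj)) (hQ k hk)]
        simp only [← mul_assoc, ← pow_add, add_comm j ν, integral_Ioo_pow_mul_one_sub_pow,
          ← factorial_ratio_mul_beta n j ν μ hμ]
        ring
    _ = 0 := by rw [← Finset.mul_sum, hmoments, mul_zero]

/-- The average characteristic polynomial after multiplication by a truncated
unitary matrix: `P_n(x) = Σ_j ((n+ν)!(j+ν+μ)!/((n+ν+μ)!(j+ν)!)) a_j x^j` is a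
monic polynomial of degree `n` orthogonal to all the transformed dual
functions `Q_k`, `k < n`. -/
theorem stmt13
    (n : ℕ) (hn : 1 ≤ n) (ν μ : ℕ) (hμ : 1 ≤ μ)
    (q : ℕ → ℝ → ℝ) (hqmeas : ∀ k < n, Measurable (q k))
    (hqint : ∀ k < n, ∀ j ≤ n, IntegrableOn (fun x => x ^ j * |q k x|) (Ioi 0))
    (Q : ℕ → ℝ → ℝ)
    (hQ : ∀ k < n, ∀ y ∈ Ioi (0:ℝ),
      Q k y = ∫ t in Ioo (0:ℝ) 1, t ^ ν * (1 - t) ^ (μ - 1) * q k (y / t) / t)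
    (a : ℕ → ℝ) (hmonic : a n = 1)
    (pn : ℝ → ℝ)
    (hpn : ∀ x : ℝ, pn x = ∑ j ∈ Finset.range (n + 1), a j * x ^ j)
    (horth : ∀ k < n, ∫ x in Ioi (0:ℝ), pn x * q k x = 0)
    (Pn : ℝ → ℝ)
    (hPn : ∀ x : ℝ, Pn x = ∑ j ∈ Finset.range (n + 1),
      (Nat.factorial (n + ν) : ℝ) * (Nat.factorial (j + ν + μ) : ℝ) /
        ((Nat.factorial (n + ν + μ) : ℝ) * (Nat.factorial (j + ν) : ℝ)) * a j * x ^ j) :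
    (∃ P : Polynomial ℝ, P.Monic ∧ P.natDegree = n ∧ ∀ x : ℝ, Pn x = P.eval x) ∧
    ∀ k < n,
      IntegrableOn (fun x => Pn x * Q k x) (Ioi 0) ∧
      ∫ x in Ioi (0:ℝ), Pn x * Q k x = 0 :=
  stmt13_general n ν μ hμ q hqmeas hqint Q hQ a hmonic pn hpn horth Pn hPn
end
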